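/- arXiv:1508.05253 — 8 statements merged into one kernel-verified Lean document; each statement's English description precedes it below -/
import Mathlib

section
/- For a multi-agent problem with k agents, if x and y are both proportional fair solutions, then u_j(x) = u_j(y) for every agent j = 1, …, k. -/
lemma div_add_div_self_le_two {a b : ℝ} (ha : 0 < a) (hb : 0 < b)
    (h : a / b + b / a ≤ 2) : a = b := by
  rw [div_add_div _ _ (ne_of_gt hb) (ne_of_gt ha), div_le_iff₀ (mul_pos hb ha)] at h
  nlinarith [sq_nonneg (a - b)]

lemma two_le_div_add_div {a b : ℝ} (ha : 0 < a) (hb : 0 < b) :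
    (2:ℝ) ≤ a / b + b / a := by
  rw [div_add_div _ _ (ne_of_gt hb) (ne_of_gt ha), le_div_iff₀ (mul_pos hb ha)]
  nlinarith [sq_nonneg (a - b)]

/-- If two proportional fair solutions exist for a multi-agent problem with `k` agents,
then every agent obtains the same utility in both of them. -/
theorem pf_unique {X : Type*} [Nonempty X] {k : ℕ} (u : Fin k → X → ℝ)
    (hnn : ∀ j x, 0 ≤ u j x) (x y : X)
    (hxpos : ∀ j, 0 < u j x) (hxPF : ∀ w : X, ∑ j, u j w / u j x ≤ (k : ℝ))
    (hypos : ∀ j, 0 < u j y) (hyPF : ∀ w : X, ∑ j, u j w / u j y ≤ (k : ℝ)) :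
    ∀ j, u j x = u j y := by
  have hsum : ∑ j, (u j y / u j x + u j x / u j y - 2) ≤ 0 := by
    have h1 := hxPF y
    have h2 := hyPF x
    have heq : ∑ j, (u j y / u j x + u j x / u j y - 2)
        = (∑ j, u j y / u j x) + (∑ j, u j x / u j y) - 2 * k := by
      rw [Finset.sum_sub_distrib, Finset.sum_add_distrib]
      simp [mul_comm]
    linarith [heq.le, heq.ge]
  have hterm : ∀ j ∈ Finset.univ, (0:ℝ) ≤ u j y / u j x + u j x / u j y - 2 := by
    intro j _
    have := two_le_div_add_div (hypos j) (hxpos j)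
    linarith
  have hzero := (Finset.sum_eq_zero_iff_of_nonneg hterm).mp
    (le_antisymm hsum (Finset.sum_nonneg hterm))
  intro j
  have h := hzero j (Finset.mem_univ j)
  exact (div_add_div_self_le_two (hypos j) (hxpos j) (by linarith)).symm
end

section
/- For a multi-agent problem with k agents, if a proportional fair solution x_PF exists, then it maximizes the product of agents' utilities: ∏_{j=1}^k u_j(x_PF) ≥ ∏_{j=1}^k u_j(x) for every x ∈ X. -/
/-- If a proportional fair solution exists, then it maximizes the product of the
agents' utilities over all feasible solutions. -/
theorem pf_maximizes_product {X : Type*} [Nonempty X] {k : ℕ} (u : Fin k → X → ℝ)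
    (hnn : ∀ j x, 0 ≤ u j x) (xPF : X)
    (hpos : ∀ j, 0 < u j xPF) (hPF : ∀ w : X, ∑ j, u j w / u j xPF ≤ (k : ℝ)) :
    ∀ x : X, ∏ j, u j x ≤ ∏ j, u j xPF := by
  intro x
  rcases Nat.eq_zero_or_pos k with hk | hk
  · subst hk; simp
  set r : Fin k → ℝ := fun j => u j x / u j xPF with hr
  have hrnn : ∀ j, 0 ≤ r j := fun j => div_nonneg (hnn j x) (hpos j).le
  have hkpos : (0:ℝ) < k := by exact_mod_cast hk
  have hsum : ∑ j, (1 / (k:ℝ)) * r j ≤ 1 := by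
    rw [← Finset.mul_sum]
    rw [one_div, inv_mul_le_iff₀ hkpos, mul_one]
    exact hPF x
  have hgm : ∏ j, r j ^ ((1:ℝ) / k) ≤ 1 := by
    refine le_trans (Real.geom_mean_le_arith_mean_weighted Finset.univ
      (fun _ => 1 / (k:ℝ)) r (fun i _ => by positivity) ?_ (fun i _ => hrnn i)) hsum
    simp [Finset.card_univ]
    field_simp
  have hprod1 : ∏ j, r j ≤ 1 := by
    have h1 : (∏ j, r j) ^ ((1:ℝ)/k) ≤ 1 := by
      rwa [← Real.finset_prod_rpow _ _ (fun i _ => hrnn i)]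
    have hpnn : 0 ≤ ∏ j, r j := Finset.prod_nonneg fun i _ => hrnn i
    by_contra h
    push_neg at h
    have := Real.one_lt_rpow_iff_of_pos (lt_trans one_pos h) (y := (1:ℝ)/k)
    have : 1 < (∏ j, r j) ^ ((1:ℝ)/k) := (this).mpr (Or.inl ⟨h, by positivity⟩)
    linarith
  have hfac : ∏ j, r j = (∏ j, u j x) / (∏ j, u j xPF) := by
    rw [Finset.prod_div_distrib]
  have hppos : 0 < ∏ j, u j xPF := Finset.prod_pos fun i _ => hpos i
  rw [hfac, div_le_one hppos] at hprod1
  exact hprod1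
end

section
/- For every integer k ≥ 2 and every ε > 0, there exists a multi-agent problem with k agents (a finite nonempty set X of feasible solutions with nonnegative utility functions u_1, …, u_k), a system optimum x* with z(x*) > 0, and a proportional fair solution x_PF such that z(x*) − z(x_PF) ≥ ((k − 1)/k − ε) · z(x*). Hence the bound (k−1)/k on the Price of Fairness for proportional fair solutions is tight. -/
lemma sum_ite_fin (k : ℕ) (hk : 0 < k) (c d : ℝ) :
    ∑ j : Fin k, (if j = (⟨0, hk⟩ : Fin k) then c else d) = c + ((k:ℝ)-1)*d := by
  have h : ∀ j : Fin k, (if j = (⟨0, hk⟩ : Fin k) then c else d)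
      = d + (if j = (⟨0, hk⟩ : Fin k) then c - d else 0) := by
    intro j; split <;> ring
  simp_rw [h, Finset.sum_add_distrib, Finset.sum_ite_eq' Finset.univ, Finset.sum_const]
  simp
  ring

/-- For every `k ≥ 2` and `ε > 0` there is a multi-agent problem with `k` agents,
a system optimum `xstar` with positive social utility and a proportional fair
solution `xPF` whose loss is at least `((k-1)/k - ε) · z(xstar)`:
the bound `(k-1)/k` on the Price of Fairness is tight. -/
theorem pf_bound_tight (k : ℕ) (hk : 2 ≤ k) (ε : ℝ) (hε : 0 < ε) :
    ∃ (X : Type) (_ : Fintype X) (_ : Nonempty X) (u : Fin k → X → ℝ),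
      (∀ j x, 0 ≤ u j x) ∧
      ∃ xstar xPF : X,
        (∀ x, ∑ j, u j x ≤ ∑ j, u j xstar) ∧
        (0 < ∑ j, u j xstar) ∧
        (∀ j, 0 < u j xPF) ∧
        (∀ y, ∑ j, u j y / u j xPF ≤ (k : ℝ)) ∧
        (((k : ℝ) - 1) / k - ε) * (∑ j, u j xstar) ≤
          (∑ j, u j xstar) - ∑ j, u j xPF := by
  have hk0 : 0 < k := by omega
  set b : ℝ := min ε 1 with hb
  have hb0 : 0 < b := lt_min hε one_pos
  have hb1 : b ≤ 1 := min_le_right _ _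
  have hbε : b ≤ ε := min_le_left _ _
  set z0 : Fin k := ⟨0, hk0⟩ with hz0
  refine ⟨Bool, inferInstance, inferInstance,
    fun j x => if x then (if j = z0 then (k:ℝ) else 0) else (if j = z0 then 1 else b),
    ?_, true, false, ?_, ?_, ?_, ?_, ?_⟩
  · intro j x
    have : (0:ℝ) ≤ (k:ℝ) := Nat.cast_nonneg k
    cases x <;> dsimp only <;> split <;> first | exact hb0.le | positivity
  · intro x
    have hT : ∑ j : Fin k, (if j = z0 then (k:ℝ) else 0) = (k:ℝ) + ((k:ℝ)-1)*0 :=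
      sum_ite_fin k hk0 _ _
    have hF : ∑ j : Fin k, (if j = z0 then (1:ℝ) else b) = 1 + ((k:ℝ)-1)*b :=
      sum_ite_fin k hk0 _ _
    have hk2 : (2:ℝ) ≤ (k:ℝ) := by exact_mod_cast hk
    cases x <;> simp only [if_true, if_false, Bool.false_eq_true, ite_true, ite_false]
    · rw [hF, hT]; nlinarith
    · rw [hT]
  · have hT : ∑ j : Fin k, (if j = z0 then (k:ℝ) else 0) = (k:ℝ) + ((k:ℝ)-1)*0 :=
      sum_ite_fin k hk0 _ _
    simp only [if_true]
    rw [hT]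
    have hk2 : (2:ℝ) ≤ (k:ℝ) := by exact_mod_cast hk
    linarith
  · intro j
    simp only [Bool.false_eq_true, ite_false]
    split
    · exact one_pos
    · exact hb0
  · intro y
    cases y
    · have : ∀ j : Fin k,
          (if j = z0 then (1:ℝ) else b) / (if j = z0 then (1:ℝ) else b) = 1 := by
        intro j; split
        · simp
        · exact div_self (ne_of_gt hb0)
      simp only [Bool.false_eq_true, ite_false]
      simp_rw [this]
      simp
    · have : ∀ j : Fin k,
          (if j = z0 then (k:ℝ) else 0) / (if j = z0 then (1:ℝ) else b)
          = (if j = z0 then (k:ℝ) else 0) := by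
        intro j; split <;> simp
      simp only [if_true, Bool.false_eq_true, ite_false]
      simp_rw [this]
      rw [sum_ite_fin k hk0]
      simp
  · have hT : ∑ j : Fin k, (if j = z0 then (k:ℝ) else 0) = (k:ℝ) + ((k:ℝ)-1)*0 :=
      sum_ite_fin k hk0 _ _
    have hF : ∑ j : Fin k, (if j = z0 then (1:ℝ) else b) = 1 + ((k:ℝ)-1)*b :=
      sum_ite_fin k hk0 _ _
    simp only [if_true, Bool.false_eq_true, ite_false]
    rw [hT, hF]
    have hk2 : (2:ℝ) ≤ (k:ℝ) := by exact_mod_cast hk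
    have hkne : (k:ℝ) ≠ 0 := by positivity
    have : (((k:ℝ)-1)/k - ε) * ((k:ℝ) + ((k:ℝ)-1)*0) = ((k:ℝ)-1) - ε*k := by
      field_simp; ring
    rw [this]
    nlinarith
end

section
/- For a multi-agent problem with k = 2 agents, if a proportional fair solution x_PF exists and x_MM is a maximin fair solution, then z(x_PF) ≥ z(x_MM). -/
/-- For `k = 2` agents, if a proportional fair solution exists then its social
utility is at least that of any maximin fair solution. -/
theorem pf_ge_maximin_two_agents {X : Type*} [Nonempty X] (u : Fin 2 → X → ℝ)
    (hnn : ∀ j x, 0 ≤ u j x) (xPF xMM : X)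
    (hpos : ∀ j, 0 < u j xPF)
    (hPF : ∀ w : X, ∑ j, u j w / u j xPF ≤ (2 : ℝ))
    (hMMpareto : ¬ ∃ y : X, (∀ j, u j xMM ≤ u j y) ∧ ∃ j, u j xMM < u j y)
    (hMM : ∀ y : X, min (u 0 y) (u 1 y) ≤ min (u 0 xMM) (u 1 xMM)) :
    ∑ j, u j xMM ≤ ∑ j, u j xPF := by
  by_contra h
  push_neg at h
  simp only [Fin.sum_univ_two] at h
  have ha := hpos 0
  have hb := hpos 1
  have hPF' := hPF xMM
  simp only [Fin.sum_univ_two] at hPF'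
  have key : u 0 xMM * u 1 xPF + u 1 xMM * u 0 xPF ≤ 2 * (u 0 xPF * u 1 xPF) := by
    rw [div_add_div _ _ (ne_of_gt ha) (ne_of_gt hb), div_le_iff₀ (by positivity)] at hPF'
    nlinarith [hPF']
  have hmin := hMM xPF
  rcases le_total (u 0 xPF) (u 1 xPF) with hab | hab
  · rw [min_eq_left hab, le_min_iff] at hmin
    nlinarith [hmin.1, hmin.2, key, h, ha, hb, hab]
  · rw [min_eq_right hab, le_min_iff] at hmin
    nlinarith [hmin.1, hmin.2, key, h, ha, hb, hab]
end

section
/- There exists a multi-agent problem with k = 3 agents (a finite nonempty set X of feasible solutions with nonnegative utility functions u_1, u_2, u_3), a proportional fair solution x_PF, and a maximin fair solution x_MM such that z(x_PF) < z(x_MM). Hence for three or more agents a proportional fair solution can have strictly smaller social utility than a maximin fair solution. -/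
/-!
Take two solutions with utility vectors `(4, 2, 1)` and `(6, 1, 1)`. Measured against the
first, the second scores `6/4 + 1/2 + 1 = 3`, so the first is proportional fair. Both have
minimum utility `1`, and the second is Pareto efficient because no solution gives agent `0`
more than `6`; so the second is maximin fair, and its social utility `8` exceeds `7`.
-/

open Matrix

def utilityTable : Matrix (Fin 2) (Fin 3) ℝ := !![4, 2, 1; 6, 1, 1]

namespace utilityTable

lemma nonneg (x : Fin 2) (j : Fin 3) : 0 ≤ utilityTable x j := by
  fin_cases x <;> fin_cases j <;> norm_num [utilityTable, cons_val_two, tail_cons]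

lemma pos_zero (j : Fin 3) : 0 < utilityTable 0 j := by
  fin_cases j <;> norm_num [utilityTable, cons_val_two, tail_cons]

lemma sum_div_zero_le (y : Fin 2) : ∑ j, utilityTable y j / utilityTable 0 j ≤ 3 := by
  fin_cases y <;> norm_num [utilityTable, cons_val_two, tail_cons, Fin.sum_univ_three]

lemma one_undominated :
    ¬ ∃ y, (∀ j, utilityTable 1 j ≤ utilityTable y j) ∧ ∃ j, utilityTable 1 j < utilityTable y j := by
  rintro ⟨y, hle, j, hlt⟩
  fin_cases y
  · exact absurd (hle 0) (by norm_num [utilityTable])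
  · exact lt_irrefl _ hlt

lemma min_le_min_one (y : Fin 2) :
    min (utilityTable y 0) (min (utilityTable y 1) (utilityTable y 2)) ≤
      min (utilityTable 1 0) (min (utilityTable 1 1) (utilityTable 1 2)) := by
  fin_cases y <;> norm_num [utilityTable, cons_val_two, tail_cons]

lemma sum_zero_lt_sum_one : ∑ j, utilityTable 0 j < ∑ j, utilityTable 1 j := by
  norm_num [utilityTable, cons_val_two, tail_cons, Fin.sum_univ_three]

end utilityTable

/-- There is a multi-agent problem with `k = 3` agents, a proportional fair solution
`xPF` and a maximin fair solution `xMM` with `z(xPF) < z(xMM)`: for three agents a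
proportional fair solution can have strictly smaller social utility than a maximin
fair solution. -/
theorem pf_lt_maximin_three_agents :
    ∃ (X : Type) (_ : Fintype X) (_ : Nonempty X) (u : Fin 3 → X → ℝ),
      (∀ j x, 0 ≤ u j x) ∧
      ∃ xPF xMM : X,
        (∀ j, 0 < u j xPF) ∧
        (∀ y, ∑ j, u j y / u j xPF ≤ (3 : ℝ)) ∧
        (¬ ∃ y : X, (∀ j, u j xMM ≤ u j y) ∧ ∃ j, u j xMM < u j y) ∧
        (∀ y : X, min (u 0 y) (min (u 1 y) (u 2 y)) ≤
          min (u 0 xMM) (min (u 1 xMM) (u 2 xMM))) ∧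
        (∑ j, u j xPF) < ∑ j, u j xMM :=
  ⟨Fin 2, inferInstance, inferInstance, utilityTableᵀ, fun j x => utilityTable.nonneg x j,
    0, 1, utilityTable.pos_zero, utilityTable.sum_div_zero_le, utilityTable.one_undominated,
    utilityTable.min_le_min_one, utilityTable.sum_zero_lt_sum_one⟩
end

section
/- For a symmetric multi-agent problem with k agents, if a proportional fair solution x_PF exists, then all agents have the same utility value in it: u_j(x_PF) = z(x_PF)/k for every agent j = 1, …, k. -/
/-- In a symmetric multi-agent problem, if a proportional fair solution exists then
all agents obtain the same utility, namely `z(xPF)/k`. -/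
theorem pf_symmetric_equal_utilities {X : Type*} [Nonempty X] {k : ℕ} (hk : 0 < k)
    (u : Fin k → X → ℝ) (hnn : ∀ j x, 0 ≤ u j x)
    (hsym : ∀ (x : X) (π : Equiv.Perm (Fin k)), ∃ y : X, ∀ j, u j x = u (π j) y)
    (xPF : X) (hpos : ∀ j, 0 < u j xPF)
    (hPF : ∀ w : X, ∑ j, u j w / u j xPF ≤ (k : ℝ)) :
    ∀ j, u j xPF = (∑ i, u i xPF) / k := by
  -- First show all utilities are equal
  have key : ∀ i j : Fin k, u i xPF = u j xPF := by
    intro i j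
    by_cases hij : i = j
    · rw [hij]
    · set π := Equiv.swap i j with hπ
      obtain ⟨y, hy⟩ := hsym xPF π
      have hyl : ∀ l, u l y = u (π l) xPF := by
        intro l
        have := hy (π l)
        rw [Equiv.swap_apply_self] at this
        exact this.symm
      have hsum : ∑ l, u (π l) xPF / u l xPF ≤ (k : ℝ) := by
        have := hPF y
        simpa [hyl] using this
      have hk' : (k : ℝ) = ∑ l : Fin k, (1 : ℝ) := by simp
      rw [hk'] at hsum
      have hsum' : ∑ l : Fin k, (u (π l) xPF / u l xPF - 1) ≤ 0 := by
        rw [Finset.sum_sub_distrib]; linarith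
      clear hsum; rename' hsum' => hsum
      have hterm : ∀ l : Fin k, l ≠ i → l ≠ j →
          u (π l) xPF / u l xPF - 1 = 0 := by
        intro l h1 h2
        rw [hπ, Equiv.swap_apply_of_ne_of_ne h1 h2]
        rw [div_self (ne_of_gt (hpos l))]; ring
      have hsum2 : (u (π i) xPF / u i xPF - 1) + (u (π j) xPF / u j xPF - 1) ≤ 0 := by
        have hmem : i ∈ Finset.univ := Finset.mem_univ i
        have hmemj : j ∈ (Finset.univ : Finset (Fin k)).erase i :=
          Finset.mem_erase.mpr ⟨Ne.symm hij, Finset.mem_univ j⟩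
        have e1 := Finset.add_sum_erase Finset.univ
          (fun l => u (π l) xPF / u l xPF - 1) hmem
        have e2 := Finset.add_sum_erase ((Finset.univ : Finset (Fin k)).erase i)
          (fun l => u (π l) xPF / u l xPF - 1) hmemj
        have hrest : ∑ l ∈ (((Finset.univ : Finset (Fin k)).erase i).erase j),
            (u (π l) xPF / u l xPF - 1) = 0 := by
          apply Finset.sum_eq_zero
          intro l hl
          simp only [Finset.mem_erase] at hl
          exact hterm l hl.2.1 hl.1
        rw [← e1, ← e2, hrest] at hsum
        linarith
      rw [hπ, Equiv.swap_apply_left, Equiv.swap_apply_right] at hsum2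
      have hi := hpos i
      have hj := hpos j
      have h1 : u j xPF / u i xPF = u j xPF / u i xPF := rfl
      have hmul : u j xPF * u j xPF + u i xPF * u i xPF ≤ 2 * (u i xPF * u j xPF) := by
        have := hsum2
        have h2 : u j xPF / u i xPF + u i xPF / u j xPF ≤ 2 := by linarith
        rw [div_add_div _ _ (ne_of_gt hi) (ne_of_gt hj), div_le_iff₀ (by positivity)] at h2
        nlinarith
      nlinarith [sq_nonneg (u i xPF - u j xPF)]
  intro j
  have hsum : ∑ i, u i xPF = k * u j xPF := by
    rw [Finset.sum_congr rfl (fun i _ => key i j)]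
    simp [mul_comm]
  rw [hsum]
  field_simp
end

section
/- For a symmetric multi-agent problem with k agents, if a proportional fair solution x_PF exists, then it is system optimal: z(x_PF) ≥ z(x) for every x ∈ X. -/
/-- In a symmetric multi-agent problem, if a proportional fair solution exists then
it is system optimal. -/
theorem pf_symmetric_system_optimal {X : Type*} [Nonempty X] {k : ℕ} (hk : 0 < k)
    (u : Fin k → X → ℝ) (hnn : ∀ j x, 0 ≤ u j x)
    (hsym : ∀ (x : X) (π : Equiv.Perm (Fin k)), ∃ y : X, ∀ j, u j x = u (π j) y)
    (xPF : X) (hpos : ∀ j, 0 < u j xPF)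
    (hPF : ∀ w : X, ∑ j, u j w / u j xPF ≤ (k : ℝ)) :
    ∀ x : X, ∑ j, u j x ≤ ∑ j, u j xPF := by
  haveI : NeZero k := ⟨hk.ne'⟩
  intro x
  set T : ℝ := ∑ j, (u j xPF)⁻¹ with hT
  have hTpos : 0 < T :=
    Finset.sum_pos (fun j _ => inv_pos.2 (hpos j)) Finset.univ_nonempty
  -- choose the symmetric images under the cyclic shifts
  choose y hy using fun i : Fin k => hsym x (Equiv.addRight i)
  have hy' : ∀ i j : Fin k, u j (y i) = u (j - i) x := by
    intro i j
    have h := hy i (j - i)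
    simpa [Equiv.addRight, sub_add_cancel] using h.symm
  -- double sum bound
  have hsum : (∑ j, u j x) * T ≤ (k : ℝ) * k := by
    have h1 : ∑ i : Fin k, ∑ j, u j (y i) / u j xPF ≤ ∑ _i : Fin k, (k : ℝ) :=
      Finset.sum_le_sum fun i _ => hPF (y i)
    have h2 : ∑ i : Fin k, ∑ j, u j (y i) / u j xPF = (∑ j, u j x) * T := by
      simp only [hy']
      rw [Finset.sum_comm, hT, Finset.mul_sum]
      refine Finset.sum_congr rfl fun j _ => ?_
      have h3 : ∑ i : Fin k, u (j - i) x = ∑ m, u m x :=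
        Fintype.sum_equiv (Equiv.subLeft j) _ _ (fun i => rfl)
      rw [← h3, Finset.sum_mul]
      refine Finset.sum_congr rfl fun i _ => ?_
      rw [div_eq_mul_inv]
    rw [← h2]
    simpa using h1
  -- Cauchy–Schwarz: k^2 ≤ (∑ u j xPF) * T
  have hcs : (k : ℝ) * k ≤ (∑ j, u j xPF) * T := by
    have := Finset.sum_mul_sq_le_sq_mul_sq Finset.univ
      (fun j => Real.sqrt (u j xPF)) (fun j => Real.sqrt ((u j xPF)⁻¹))
    have hone : ∀ j : Fin k,
        Real.sqrt (u j xPF) * Real.sqrt ((u j xPF)⁻¹) = 1 := by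
      intro j
      rw [← Real.sqrt_mul (hpos j).le, mul_inv_cancel₀ (hpos j).ne', Real.sqrt_one]
    have hsq : ∀ j : Fin k, Real.sqrt (u j xPF) ^ 2 = u j xPF := fun j =>
      Real.sq_sqrt (hpos j).le
    have hsq' : ∀ j : Fin k, Real.sqrt ((u j xPF)⁻¹) ^ 2 = (u j xPF)⁻¹ := fun j =>
      Real.sq_sqrt (inv_pos.2 (hpos j)).le
    simp only [hone, hsq, hsq', Finset.sum_const, Finset.card_univ,
      Fintype.card_fin, nsmul_eq_mul, mul_one] at this
    calc (k : ℝ) * k = ((k : ℝ)) ^ 2 := by ring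
      _ ≤ (∑ j, u j xPF) * T := this
  have := hsum.trans hcs
  exact le_of_mul_le_mul_right this hTpos
end

section
/- Let 0 < α ≤ 1 and consider an instance of the FSSP with two agents and separate item sets in which every item weight is at most α. Then every Pareto efficient feasible solution x satisfies z(x) > 1 − α, and consequently z* − z(x) ≤ α · z*. -/
/-! Definitions for the Fair Subset Sum Problem (FSSP) with two agents `A` and `B`
owning separate item sets with weights `a : Fin n → ℝ` and `b : Fin m → ℝ`.
A solution is a pair of index subsets; feasibility means the total selected
weight does not exceed the capacity `1`. -/

/-- Total weight of the items of `S`. -/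
noncomputable def sumw {n : ℕ} (a : Fin n → ℝ) (S : Finset (Fin n)) : ℝ := ∑ i ∈ S, a i

/-- A feasible solution of FSSP with separate item sets. -/
def Feas {n m : ℕ} (a : Fin n → ℝ) (b : Fin m → ℝ)
    (x : Finset (Fin n) × Finset (Fin m)) : Prop :=
  sumw a x.1 + sumw b x.2 ≤ 1

/-- Social utility `z(x) = a(x) + b(x)`. -/
noncomputable def zv {n m : ℕ} (a : Fin n → ℝ) (b : Fin m → ℝ)
    (x : Finset (Fin n) × Finset (Fin m)) : ℝ :=
  sumw a x.1 + sumw b x.2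

/-- Pareto efficient feasible solution. -/
def Pareto {n m : ℕ} (a : Fin n → ℝ) (b : Fin m → ℝ)
    (x : Finset (Fin n) × Finset (Fin m)) : Prop :=
  Feas a b x ∧ ¬ ∃ y, Feas a b y ∧ sumw a x.1 ≤ sumw a y.1 ∧ sumw b x.2 ≤ sumw b y.2 ∧
    (sumw a x.1 < sumw a y.1 ∨ sumw b x.2 < sumw b y.2)

/-- System optimum: a feasible solution maximizing the social utility. -/
def SysOpt {n m : ℕ} (a : Fin n → ℝ) (b : Fin m → ℝ)
    (x : Finset (Fin n) × Finset (Fin m)) : Prop :=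
  Feas a b x ∧ ∀ y, Feas a b y → zv a b y ≤ zv a b x

/-- Maximin fair solution: Pareto efficient and maximizing `min{a(x), b(x)}`. -/
def Maximin {n m : ℕ} (a : Fin n → ℝ) (b : Fin m → ℝ)
    (x : Finset (Fin n) × Finset (Fin m)) : Prop :=
  Pareto a b x ∧ ∀ y, Feas a b y →
    min (sumw a y.1) (sumw b y.2) ≤ min (sumw a x.1) (sumw b x.2)

/-- Proportional fair solution. -/
def PropFair {n m : ℕ} (a : Fin n → ℝ) (b : Fin m → ℝ)
    (x : Finset (Fin n) × Finset (Fin m)) : Prop :=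
  Feas a b x ∧ 0 < sumw a x.1 ∧ 0 < sumw b x.2 ∧
    ∀ y, Feas a b y → sumw a y.1 / sumw a x.1 + sumw b y.2 / sumw b x.2 ≤ 2

/-- Kalai–Smorodinski fair solution: Pareto efficient and maximizing
`min{a(x)/â, b(x)/b̂}`, where `â` and `b̂` are the (positive) maximal utilities
each agent can obtain over all feasible solutions. -/
def KSFair {n m : ℕ} (a : Fin n → ℝ) (b : Fin m → ℝ)
    (x : Finset (Fin n) × Finset (Fin m)) : Prop :=
  Pareto a b x ∧ ∃ ahat bhat : ℝ, 0 < ahat ∧ 0 < bhat ∧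
    IsGreatest {v | ∃ y, Feas a b y ∧ sumw a y.1 = v} ahat ∧
    IsGreatest {v | ∃ y, Feas a b y ∧ sumw b y.2 = v} bhat ∧
    ∀ y, Feas a b y →
      min (sumw a y.1 / ahat) (sumw b y.2 / bhat) ≤
        min (sumw a x.1 / ahat) (sumw b x.2 / bhat)

/-- A valid FSSP instance with separate item sets in which every item weight is
nonnegative and at most `α`, and the total weight exceeds the capacity `1`. -/
def ValidInst {n m : ℕ} (a : Fin n → ℝ) (b : Fin m → ℝ) (α : ℝ) : Prop :=
  (∀ i, 0 ≤ a i) ∧ (∀ i, 0 ≤ b i) ∧ (∀ i, a i ≤ α) ∧ (∀ i, b i ≤ α) ∧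
    1 < (∑ i, a i) + (∑ i, b i)

lemma pareto_gt (α : ℝ) (hα0 : 0 < α)
    {n m : ℕ} (a : Fin n → ℝ) (b : Fin m → ℝ) (hinst : ValidInst a b α)
    (x : Finset (Fin n) × Finset (Fin m)) (hx : Pareto a b x) :
    1 - α < zv a b x := by
  obtain ⟨ha0, hb0, haα, hbα, htot⟩ := hinst
  obtain ⟨hfeas, hnim⟩ := hx
  by_contra h
  push_neg at h
  have hca : ∑ i ∈ x.1ᶜ, a i + ∑ i ∈ x.1, a i = ∑ i, a i := Finset.sum_compl_add_sum x.1 a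
  have hcb : ∑ i ∈ x.2ᶜ, b i + ∑ i ∈ x.2, b i = ∑ i, b i := Finset.sum_compl_add_sum x.2 b
  have hz : zv a b x = sumw a x.1 + sumw b x.2 := rfl
  have hpos : 0 < ∑ i ∈ x.1ᶜ, a i + ∑ i ∈ x.2ᶜ, b i := by
    simp only [zv, sumw] at h
    linarith
  have hex : (∃ i ∈ x.1ᶜ, 0 < a i) ∨ (∃ i ∈ x.2ᶜ, 0 < b i) := by
    by_contra hc
    push_neg at hc
    have h1 : ∑ i ∈ x.1ᶜ, a i ≤ 0 := Finset.sum_nonpos (fun i hi => hc.1 i hi)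
    have h2 : ∑ i ∈ x.2ᶜ, b i ≤ 0 := Finset.sum_nonpos (fun i hi => hc.2 i hi)
    linarith
  apply hnim
  rcases hex with ⟨i, hi, hai⟩ | ⟨i, hi, hbi⟩
  · have hni : i ∉ x.1 := Finset.mem_compl.mp hi
    refine ⟨(insert i x.1, x.2), ?_, ?_, le_refl _, Or.inl ?_⟩
    · show sumw a (insert i x.1) + sumw b x.2 ≤ 1
      simp only [sumw, Finset.sum_insert hni]
      have := haα i
      simp only [zv, sumw] at h
      linarith
    · show sumw a x.1 ≤ sumw a (insert i x.1)
      simp only [sumw, Finset.sum_insert hni]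
      linarith
    · show sumw a x.1 < sumw a (insert i x.1)
      simp only [sumw, Finset.sum_insert hni]
      linarith
  · have hni : i ∉ x.2 := Finset.mem_compl.mp hi
    refine ⟨(x.1, insert i x.2), ?_, le_refl _, ?_, Or.inr ?_⟩
    · show sumw a x.1 + sumw b (insert i x.2) ≤ 1
      simp only [sumw, Finset.sum_insert hni]
      have := hbα i
      simp only [zv, sumw] at h
      linarith
    · show sumw b x.2 ≤ sumw b (insert i x.2)
      simp only [sumw, Finset.sum_insert hni]
      linarith
    · show sumw b x.2 < sumw b (insert i x.2)
      simp only [sumw, Finset.sum_insert hni]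
      linarith

/-- Every Pareto efficient solution of an FSSP instance with all item weights at
most `α` has social utility greater than `1 - α`, hence its loss w.r.t. the
system optimum is at most `α · z*`. -/
theorem pof_pareto_le_alpha (α : ℝ) (hα0 : 0 < α) (hα1 : α ≤ 1)
    {n m : ℕ} (a : Fin n → ℝ) (b : Fin m → ℝ) (hinst : ValidInst a b α)
    (xopt : Finset (Fin n) × Finset (Fin m)) (hopt : SysOpt a b xopt)
    (x : Finset (Fin n) × Finset (Fin m)) (hx : Pareto a b x) :
    1 - α < zv a b x ∧ zv a b xopt - zv a b x ≤ α * zv a b xopt := by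
  have h1 : 1 - α < zv a b x := pareto_gt α hα0 a b hinst x hx
  have hz1 : zv a b xopt ≤ 1 := hopt.1
  have hz0 : zv a b x ≤ zv a b xopt := hopt.2 x hx.1
  constructor
  · exact h1
  · nlinarith
end
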